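/- arXiv:0809.4425 — 2 statements merged into one kernel-verified Lean document; each statement's English description precedes it below -/
import Mathlib

section
/- For each 1 ≤ s ≤ n, the Mùi invariant M_{n,s} lies in N_1 ∩ Ess(A); that is, M_{n,s} lies in the two-sided ideal generated by a_φ and x_φ for every nonzero φ ∈ F_p^n. -/
set_option maxHeartbeats 1000000
set_option synthInstance.maxHeartbeats 400000

open scoped BigOperators

noncomputable section

/-- The polynomial part `F_p[x_1,…,x_m]`. -/
abbrev Rp (p m : ℕ) := MvPolynomial (Fin m) (ZMod p)

/-- The model `A = F_p[x_1,…,x_m] ⊗ Λ(a_1,…,a_m)` of the mod-`p` cohomology ring of an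
elementary abelian `p`-group of rank `m`, realized as the exterior algebra over the
polynomial ring `Rp p m` on the free module of rank `m`. -/
abbrev Ap (p m : ℕ) := ExteriorAlgebra (Rp p m) (Fin m → Rp p m)

/-- The degree-one exterior generators `a_i`. -/
def aa (p m : ℕ) (i : Fin m) : Ap p m := ExteriorAlgebra.ι (Rp p m) (Pi.single i 1)

/-- The degree-two polynomial generators `x_i`. -/
def xx (p m : ℕ) (i : Fin m) : Ap p m := algebraMap (Rp p m) (Ap p m) (MvPolynomial.X i)

/-- The ordered product `a_{i_1} ⋯ a_{i_r}` over a subset `S = {i_1 < ⋯ < i_r}`. -/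
def aProd (p m : ℕ) (S : Finset (Fin m)) : Ap p m := ((S.sort (· ≤ ·)).map (aa p m)).prod

/-- `N_r = F_p[x_1,…,x_m] ⊗ Λ^r`, the `Rp p m`-submodule of `Ap p m` spanned by the products
`a_{i_1} ⋯ a_{i_r}` with `i_1 < ⋯ < i_r`. -/
def Nsub (p m : ℕ) (r : ℕ) : Submodule (Rp p m) (Ap p m) :=
  Submodule.span (Rp p m) {z | ∃ S : Finset (Fin m), S.card = r ∧ z = aProd p m S}

/-- `a_φ = Σ_i φ_i a_i` for `φ ∈ F_p^m`. -/
def aphi (p m : ℕ) (φ : Fin m → ZMod p) : Ap p m :=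
  ∑ i : Fin m, (MvPolynomial.C (φ i) : Rp p m) • aa p m i

/-- `x_φ = Σ_i φ_i x_i` for `φ ∈ F_p^m`. -/
def xphi (p m : ℕ) (φ : Fin m → ZMod p) : Ap p m :=
  ∑ i : Fin m, (MvPolynomial.C (φ i) : Rp p m) • xx p m i

/-- The essential ideal `Ess(A) = ⋂_{φ ≠ 0} (a_φ, x_φ)`, the intersection over all nonzero
`φ ∈ F_p^m` of the two-sided ideals of `A` generated by `a_φ` and `x_φ`. -/
def Ess (p m : ℕ) : Set (Ap p m) :=
  ⋂ φ ∈ {φ : Fin m → ZMod p | φ ≠ 0},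
    (TwoSidedIdeal.span {aphi p m φ, xphi p m φ} : Set (Ap p m))

/-- The `m × m` Moore matrix with entries `C_{s,i} = x_i^{p^{s-1}}` (zero-based: row `s`
has entries `x_i^{p^s}`). -/
def moore (p m : ℕ) : Matrix (Fin m) (Fin m) (Rp p m) :=
  Matrix.of fun s i => (MvPolynomial.X i) ^ (p ^ (s : ℕ))

/-- `L_m = det C`, the Moore determinant. -/
def Ldet (p m : ℕ) : Rp p m := (moore p m).det

/-- `γ_{s,i}`: the determinant of the minor of the Moore matrix obtained by deleting
row `s` and column `i` (here the rank is `n+1`). -/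
def gam (p n : ℕ) (s i : Fin (n + 1)) : Rp p (n + 1) :=
  ((moore p (n + 1)).submatrix s.succAbove i.succAbove).det

/-- The Mùi invariant `M_{n,s} = Σ_i (-1)^{i+1} γ_{s,i} a_i` (zero-based sign `(-1)^i`). -/
def Mui (p n : ℕ) (s : Fin (n + 1)) : Ap p (n + 1) :=
  ∑ i : Fin (n + 1), (((-1) ^ (i : ℕ) * gam p n s i : Rp p (n + 1))) • aa p (n + 1) i

/-!
Up to the sign `(-1)^s`, the coefficients `c_i = (-1)^i γ_{s,i}` of `M_{n,s}` form column `s` of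
the adjugate of the Moore matrix `C`, so `Σ_i c_i v_i = ± det` of `C` with row `s` replaced by `v`.
Fix `φ ≠ 0` with `φ_j ≠ 0`. By the Frobenius, row `t` of `C` applied to `φ` is `x_φ^{p^t}`, so
all rows of `C` are orthogonal to `φ` modulo `x_φ`; so is the constant vector
`φ_j e_i - φ_i e_j`. Putting it in row `s` yields a matrix whose determinant, times the unit
`φ_j`, is divisible by `x_φ`. Hence `φ_j c_i ≡ φ_i c_j (mod x_φ)`, i.e.
`φ_j M_{n,s} ≡ c_j a_φ` modulo `x_φ N_1`, and `M_{n,s} ∈ (a_φ, x_φ)`.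
-/

namespace Matrix

variable {n R : Type*} [Fintype n] [DecidableEq n] [CommRing R]

theorem det_updateRow_eq_vecMul_adjugate (A : Matrix n n R) (s : n) (w : n → R) :
    (A.updateRow s w).det = (w ᵥ* adjugate A) s := by
  rw [← cramer_transpose_apply, cramer_eq_adjugate_mulVec, ← adjugate_transpose,
    mulVec_transpose]

-- Replacing column `j` by `A *ᵥ φ` multiplies the determinant by `φ j`.
theorem dvd_mul_det_of_forall_dvd_mulVec (A : Matrix n n R) (φ : n → R) (ℓ : R)
    (h : ∀ t, ℓ ∣ (A *ᵥ φ) t) (j : n) : ℓ ∣ φ j * A.det := by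
  choose u hu using h
  have hcol : (fun k ↦ ∑ i, φ i • A k i) = ℓ • u := by
    ext k
    simp only [smul_eq_mul, Pi.smul_apply, ← hu k, mulVec, dotProduct, mul_comm]
  rw [← smul_eq_mul, ← det_updateCol_sum, hcol, det_updateCol_smul]
  exact dvd_mul_right ℓ _

theorem dvd_mul_adjugate_sub_of_dvd_mulVec (A : Matrix n n R) (φ : n → R) (ℓ : R) (s : n)
    (h : ∀ t ≠ s, ℓ ∣ (A *ᵥ φ) t) {j : n} (hj : IsUnit (φ j)) (i : n) :
    ℓ ∣ φ j * adjugate A i s - φ i * adjugate A j s := by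
  set w : n → R := φ j • Pi.single i 1 - φ i • Pi.single j 1
  have hw : w ⬝ᵥ φ = 0 := by simp [w, sub_dotProduct, mul_comm]
  have hrows : ∀ t, ℓ ∣ (A.updateRow s w *ᵥ φ) t := by
    intro t
    rw [updateRow_mulVec]
    obtain rfl | ht := eq_or_ne t s
    · simp [hw]
    · simpa [Function.update_of_ne ht] using h t ht
  have hdet := dvd_mul_det_of_forall_dvd_mulVec _ φ ℓ hrows j
  rw [hj.dvd_mul_left, det_updateRow_eq_vecMul_adjugate] at hdet
  simpa [w, sub_vecMul, smul_vecMul] using hdet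

end Matrix

theorem sum_smul_mem_span_of_dvd {R A ι : Type*} [CommRing R] [Ring A] [Algebra R A]
    [Fintype ι] (a : ι → A) (φ c : ι → R) (ℓ : R) {j : ι} (hj : IsUnit (φ j))
    (h : ∀ i, ℓ ∣ φ j * c i - φ i * c j) :
    ∑ i, c i • a i ∈ TwoSidedIdeal.span {∑ i, φ i • a i, algebraMap R A ℓ} := by
  set I := TwoSidedIdeal.span {∑ i, φ i • a i, algebraMap R A ℓ}
  have smul_mem : ∀ (r : R) {x : A}, x ∈ I → r • x ∈ I := fun r x hx ↦ by
    rw [Algebra.smul_def]; exact I.mul_mem_left _ _ hx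
  choose d hd using h
  have hdecomp : φ j • ∑ i, c i • a i
      = c j • ∑ i, φ i • a i + ∑ i, algebraMap R A ℓ * (d i • a i) := by
    simp only [Finset.smul_sum, smul_smul, ← Algebra.smul_def, ← Finset.sum_add_distrib,
      ← add_smul]
    refine Finset.sum_congr rfl fun i _ ↦ ?_
    congr 1
    linear_combination hd i
  have hmem : φ j • ∑ i, c i • a i ∈ I := by
    rw [hdecomp]
    refine I.add_mem (smul_mem _ (TwoSidedIdeal.subset_span (Set.mem_insert _ _)))
      (sum_mem fun i _ ↦ I.mul_mem_right _ _ ?_)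
    exact TwoSidedIdeal.subset_span (Set.mem_insert_of_mem _ rfl)
  simpa [smul_smul] using smul_mem (hj.unit⁻¹ : Rˣ) hmem

open MvPolynomial Matrix

def linearForm (p m : ℕ) (φ : Fin m → ZMod p) : Rp p m := ∑ k, C (φ k) * X k

theorem xphi_eq_algebraMap_linearForm (p m : ℕ) (φ : Fin m → ZMod p) :
    xphi p m φ = algebraMap (Rp p m) (Ap p m) (linearForm p m φ) := by
  simp only [xphi, xx, linearForm, map_sum, map_mul, Algebra.smul_def]

theorem moore_mulVec (p m : ℕ) [Fact p.Prime] (φ : Fin m → ZMod p) (t : Fin m) :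
    (moore p m *ᵥ fun k ↦ C (φ k)) t = linearForm p m φ ^ p ^ (t : ℕ) := by
  rw [mulVec, dotProduct, linearForm, sum_pow_char_pow]
  refine Finset.sum_congr rfl fun k _ ↦ ?_
  rw [moore, of_apply, mul_pow, ← map_pow, ZMod.pow_card_pow, mul_comm]

theorem Mui_eq_sum_adjugate (p n : ℕ) (s : Fin (n + 1)) :
    Mui p n s = ∑ i, ((-1) ^ (s : ℕ) * adjugate (moore p (n + 1)) i s) • aa p (n + 1) i := by
  refine Finset.sum_congr rfl fun i _ ↦ ?_
  rw [adjugate_fin_succ_eq_det_submatrix, gam, ← mul_assoc, ← pow_add]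
  congr 2
  rw [← add_assoc, ← two_mul, pow_add, pow_mul, neg_one_sq, one_pow, one_mul]

theorem aa_mem_Nsub_one (p m : ℕ) (i : Fin m) : aa p m i ∈ Nsub p m 1 :=
  Submodule.subset_span ⟨{i}, Finset.card_singleton i, by simp [aProd, Finset.sort_singleton]⟩

theorem Mui_mem_N_one_inter_Ess_general (p n : ℕ) [Fact p.Prime]
    (s : Fin (n + 1)) :
    Mui p n s ∈ Nsub p (n + 1) 1 ∧ Mui p n s ∈ Ess p (n + 1) := by
  refine ⟨sum_mem fun i _ ↦ Submodule.smul_mem _ _ (aa_mem_Nsub_one p _ i), ?_⟩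
  refine Set.mem_iInter₂.mpr fun φ hφ ↦ ?_
  obtain ⟨j, hj⟩ := Function.ne_iff.mp hφ
  have hunit : IsUnit (C (φ j) : Rp p (n + 1)) := (Ne.isUnit hj).map C
  have hrows (t : Fin (n + 1)) (_ : t ≠ s) :
      linearForm p (n + 1) φ ∣ (moore p (n + 1) *ᵥ fun k ↦ C (φ k)) t := by
    rw [moore_mulVec]
    exact dvd_pow_self _ (pow_ne_zero _ (Fact.out : p.Prime).ne_zero)
  rw [Mui_eq_sum_adjugate, xphi_eq_algebraMap_linearForm]
  refine sum_smul_mem_span_of_dvd _ (fun k ↦ C (φ k)) _ _ hunit fun i ↦ ?_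
  have hadj := dvd_mul_adjugate_sub_of_dvd_mulVec _ _ _ s hrows hunit i
  exact hadj.trans ⟨(-1) ^ (s : ℕ), by ring⟩

/-- For each `s`, the Mùi invariant `M_{n,s}` lies in `N_1 ∩ Ess(A)`
(the rank is `n+1`). -/
theorem Mui_mem_N_one_inter_Ess (p n : ℕ) [Fact p.Prime] (hodd : Odd p)
    (s : Fin (n + 1)) :
    Mui p n s ∈ Nsub p (n + 1) 1 ∧ Mui p n s ∈ Ess p (n + 1) :=
  Mui_mem_N_one_inter_Ess_general p n s
end
end

section
/- For subsets S, T ⊆ {1,…,n}: if S ∩ T ≠ ∅ then M_{n,S} M_{n,T} = 0, and if S ∩ T = ∅ then M_{n,S} M_{n,T} = ε L_n M_{n,S∪T} for some sign ε ∈ {+1, −1} (depending on S and T). -/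
set_option maxHeartbeats 1000000
set_option synthInstance.maxHeartbeats 400000

open scoped BigOperators

noncomputable section

/-! The Mùi invariant `M_{n,s}` is the image under `ι` of a vector, so the `M_{n,s}` anticommute
and square to zero. Hence `M_{n,s_1} ⋯ M_{n,s_r} · M_{n,t_1} ⋯ M_{n,t_q}` vanishes as soon as an
index repeats, and otherwise is `±` the ordered product over `S ∪ T`. Multiplying the claim by
`L_n^{|S|+|T|}` reduces it to these identities, and that factor can be cancelled: `A` is a free
module over the polynomial ring, and `L_n ≠ 0` because the diagonal monomial
`x_1 x_2^p ⋯ x_n^{p^{n-1}}` occurs in the Moore determinant with coefficient `1`. -/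

instance ExteriorAlgebra.instModuleFree {R M : Type*} [CommRing R] [AddCommGroup M] [Module R M]
    [Module.Free R M] : Module.Free R (ExteriorAlgebra R M) := by
  classical
  obtain ⟨⟨I, b⟩⟩ := Module.Free.exists_basis (R := R) (M := M)
  let : LinearOrder I := linearOrderOfSTO WellOrderingRel
  exact .of_basis b.ExteriorAlgebra

section AnticommutingFamily

variable {ι A : Type*} [Ring A] {f : ι → A}

theorem List.exists_units_prod_map_eq_of_perm (hf : ∀ i j, f i * f j = -(f j * f i))
    {l l' : List ι} (h : l.Perm l') : ∃ ε : ℤˣ, (l.map f).prod = ε • (l'.map f).prod := by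
  induction h with
  | nil => exact ⟨1, (one_smul ℤˣ _).symm⟩
  | cons x _ ih =>
    obtain ⟨ε, hε⟩ := ih
    exact ⟨ε, by simp only [List.map_cons, List.prod_cons, hε, mul_smul_comm]⟩
  | swap x y l =>
    refine ⟨-1, ?_⟩
    simp only [List.map_cons, List.prod_cons, ← mul_assoc, hf y x, Units.neg_smul, one_smul,
      neg_mul]
  | trans _ _ ih₁ ih₂ =>
    obtain ⟨ε₁, h₁⟩ := ih₁
    obtain ⟨ε₂, h₂⟩ := ih₂
    exact ⟨ε₁ * ε₂, by rw [h₁, h₂, smul_smul]⟩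

theorem List.prod_map_eq_zero_of_not_nodup (hsq : ∀ i, f i * f i = 0)
    (hf : ∀ i j, f i * f j = -(f j * f i)) {l : List ι} (h : ¬ l.Nodup) :
    (l.map f).prod = 0 := by
  obtain ⟨a, ha⟩ : ∃ a, List.Sublist [a, a] l := by simpa [List.nodup_iff_sublist] using h
  obtain ⟨rest, hrest⟩ := ha.exists_perm_append
  obtain ⟨ε, hε⟩ := List.exists_units_prod_map_eq_of_perm hf hrest
  rw [hε, List.map_append, List.prod_append]
  simp [hsq]

variable [LinearOrder ι]

theorem Finset.prod_sort_mul_prod_sort_of_not_disjoint (hsq : ∀ i, f i * f i = 0)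
    (hf : ∀ i j, f i * f j = -(f j * f i)) {S T : Finset ι} (h : ¬ Disjoint S T) :
    ((S.sort (· ≤ ·)).map f).prod * ((T.sort (· ≤ ·)).map f).prod = 0 := by
  rw [← List.prod_append, ← List.map_append]
  refine List.prod_map_eq_zero_of_not_nodup hsq hf fun hnd => h ?_
  rw [List.nodup_append] at hnd
  exact Finset.disjoint_left.mpr fun a haS haT =>
    hnd.2.2 a ((S.mem_sort _).mpr haS) a ((T.mem_sort _).mpr haT) rfl

theorem Finset.exists_units_prod_sort_mul_prod_sort_of_disjoint
    (hf : ∀ i j, f i * f j = -(f j * f i)) {S T : Finset ι} (h : Disjoint S T) :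
    ∃ ε : ℤˣ, ((S.sort (· ≤ ·)).map f).prod * ((T.sort (· ≤ ·)).map f).prod =
      ε • (((S ∪ T).sort (· ≤ ·)).map f).prod := by
  rw [← List.prod_append, ← List.map_append]
  refine List.exists_units_prod_map_eq_of_perm hf ?_
  rw [← Multiset.coe_eq_coe, ← Multiset.coe_add, Finset.sort_eq, Finset.sort_eq, Finset.sort_eq,
    ← Finset.disjUnion_eq_union S T h, Finset.disjUnion_val]

end AnticommutingFamily

theorem MvPolynomial.coeff_det_X_pow {K ι : Type*} [CommRing K] [Fintype ι] [DecidableEq ι]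
    {e : ι → ℕ} (he : Function.Injective e) :
    coeff (∑ i, Finsupp.single i (e i)) (Matrix.of fun s i => (X i : MvPolynomial ι K) ^ e s).det
      = 1 := by
  have hterm : ∀ σ : Equiv.Perm ι,
      ∏ i, (Matrix.of fun s i => (X i : MvPolynomial ι K) ^ e s) (σ i) i =
        monomial (∑ i, Finsupp.single i (e (σ i))) 1 := by
    intro σ
    simp only [Matrix.of_apply, X_pow_eq_monomial, monomial_sum_one]
  rw [Matrix.det_apply, coeff_sum, Finset.sum_eq_single 1]
  · rw [hterm]
    simp [coeff_monomial]
  · intro σ _ hσ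
    rw [hterm, Units.smul_def, coeff_smul, coeff_monomial, if_neg, smul_zero]
    refine fun hd => hσ (Equiv.ext fun i => he ?_)
    simpa [Finsupp.single_apply] using DFunLike.congr_fun hd i
  · simp

theorem Ldet_ne_zero (p m : ℕ) [hp : Fact p.Prime] : Ldet p m ≠ 0 := by
  have he : Function.Injective fun s : Fin m => p ^ (s : ℕ) :=
    (Nat.pow_right_injective hp.out.two_le).comp Fin.val_injective
  have hcoeff : MvPolynomial.coeff _ (Ldet p m) = 1 :=
    MvPolynomial.coeff_det_X_pow (K := ZMod p) he
  intro h
  simp [h] at hcoeff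

theorem Mui_eq_ι (p n : ℕ) (s : Fin (n + 1)) :
    Mui p n s =
      ExteriorAlgebra.ι (Rp p (n + 1)) fun i : Fin (n + 1) => (-1) ^ (i : ℕ) * gam p n s i := by
  simp only [Mui, aa, ← map_smul, ← map_sum]
  congr 1
  funext j
  simp [Pi.single_apply]

theorem Mui_mul_self (p n : ℕ) (s : Fin (n + 1)) : Mui p n s * Mui p n s = 0 := by
  rw [Mui_eq_ι]
  exact ExteriorAlgebra.ι_sq_zero _

theorem Mui_mul_Mui_comm (p n : ℕ) (s t : Fin (n + 1)) :
    Mui p n s * Mui p n t = -(Mui p n t * Mui p n s) := by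
  rw [Mui_eq_ι p n s, Mui_eq_ι p n t]
  exact eq_neg_of_add_eq_zero_left (ExteriorAlgebra.ι_add_mul_swap _ _)

/-- `hMS` is the defining relation `L_n^{|S|-1} M_{n,S} = M_{n,s_1} ⋯ M_{n,s_r}` multiplied by
`L_n`, so that it also covers `S = ∅`; indices are zero-based and the rank is `n + 1`. -/
theorem MuiSet_mul_general (p n : ℕ) [Fact p.Prime]
    (MS : Finset (Fin (n + 1)) → Ap p (n + 1))
    (hMS : ∀ S : Finset (Fin (n + 1)),
      (Ldet p (n + 1)) ^ S.card • MS S =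
        (Ldet p (n + 1)) • ((S.sort (· ≤ ·)).map (Mui p n)).prod)
    (S T : Finset (Fin (n + 1))) :
    (S ∩ T ≠ ∅ → MS S * MS T = 0) ∧
    (S ∩ T = ∅ → ∃ ε : ℤ, (ε = 1 ∨ ε = -1) ∧
      MS S * MS T = ε • ((Ldet p (n + 1)) • MS (S ∪ T))) := by
  set L := Ldet p (n + 1)
  set P : Finset (Fin (n + 1)) → Ap p (n + 1) := fun U => ((U.sort (· ≤ ·)).map (Mui p n)).prod
  have hcancel : Function.Injective (L ^ (S.card + T.card) • · : Ap p (n + 1) → Ap p (n + 1)) :=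
    smul_right_injective _ (pow_ne_zero _ (Ldet_ne_zero p (n + 1)))
  have hprod : L ^ (S.card + T.card) • (MS S * MS T) = (L * L) • (P S * P T) := by
    rw [pow_add, ← smul_mul_smul_comm, hMS, hMS, smul_mul_smul_comm]
  refine ⟨fun hST => hcancel ?_, fun hST => ?_⟩
  · have hdisj : ¬ Disjoint S T := by
      rwa [Finset.disjoint_iff_inter_eq_empty]
    simp only [hprod, Finset.prod_sort_mul_prod_sort_of_not_disjoint (Mui_mul_self p n)
      (Mui_mul_Mui_comm p n) hdisj, smul_zero, P]
  · have hdisj : Disjoint S T := Finset.disjoint_iff_inter_eq_empty.mpr hST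
    obtain ⟨ε, hε⟩ :=
      Finset.exists_units_prod_sort_mul_prod_sort_of_disjoint (Mui_mul_Mui_comm p n) hdisj
    refine ⟨ε, Int.isUnit_iff.mp ε.isUnit, hcancel ?_⟩
    calc L ^ (S.card + T.card) • (MS S * MS T)
        = (ε : ℤ) • L • L • P (S ∪ T) := by
          rw [hprod, hε, Units.smul_def]
          module
      _ = (ε : ℤ) • L • L ^ (S ∪ T).card • MS (S ∪ T) := by rw [hMS]
      _ = L ^ (S.card + T.card) • (ε : ℤ) • L • MS (S ∪ T) := by
          rw [Finset.card_union_of_disjoint hdisj]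
          module

/-- For subsets `S, T`: if `S ∩ T ≠ ∅` then `M_{n,S} M_{n,T} = 0`; if
`S ∩ T = ∅` then `M_{n,S} M_{n,T} = ε L_n M_{n,S∪T}` for some sign `ε ∈ {1, -1}`.
Here `MS` is the family of Mùi invariants `M_{n,S}`, characterized by
`L_n^{|S|} M_{n,S} = L_n · (M_{n,s_1} ⋯ M_{n,s_r})` (equivalent to the defining relation
`L_n^{|S|-1} M_{n,S} = M_{n,s_1} ⋯ M_{n,s_r}` since multiplication by `L_n` is injective,
and giving `M_{n,∅} = L_n`). The rank is `n+1`. -/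
theorem MuiSet_mul (p n : ℕ) [Fact p.Prime] (hodd : Odd p)
    (MS : Finset (Fin (n + 1)) → Ap p (n + 1))
    (hMS : ∀ S : Finset (Fin (n + 1)),
      (Ldet p (n + 1)) ^ S.card • MS S =
        (Ldet p (n + 1)) • ((S.sort (· ≤ ·)).map (Mui p n)).prod)
    (S T : Finset (Fin (n + 1))) :
    (S ∩ T ≠ ∅ → MS S * MS T = 0) ∧
    (S ∩ T = ∅ → ∃ ε : ℤ, (ε = 1 ∨ ε = -1) ∧
      MS S * MS T = ε • ((Ldet p (n + 1)) • MS (S ∪ T))) :=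
  MuiSet_mul_general p n MS hMS S T
end
end
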